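/- arXiv:2509.10013 — 3 statements merged into one kernel-verified Lean document; each statement's English description precedes it below -/
import Mathlib

section
/- Let a₁, a₂ ∈ ℂ with a₁ − a₂ ∉ Λ_τ and a₁, a₂ ∉ S, let c, A ∈ ℂ, let φ_{a,c}(z) = c + ζ(z−a₁) + ζ(z−a₂) − ζ(z) − (1/2)(ζ(z+p) + ζ(z−p)), and set g = φ_{a,c}' + φ_{a,c}² − q(·;A). Then g has at most a simple pole at z = 0, and its residue there equals 2(ζ(a₁) + ζ(a₂) − c); in particular g extends holomorphically across 0 if and only if c = ζ(a₁) + ζ(a₂). -/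
open Complex Filter Topology

noncomputable section

/-- The lattice `Λ_τ = ℤ + τℤ`. -/
def Lam (τ : ℂ) : Set ℂ := {ω | ∃ m n : ℤ, ω = (m : ℂ) + (n : ℂ) * τ}

/-- The nonzero lattice points. -/
def Lam' (τ : ℂ) : Set ℂ := {ω | ω ∈ Lam τ ∧ ω ≠ 0}

/-- The Weierstrass elliptic function `℘(z; τ)`. -/
def wp (τ z : ℂ) : ℂ :=
  1 / z ^ 2 + ∑' ω : Lam' τ, (1 / (z - (ω : ℂ)) ^ 2 - 1 / (ω : ℂ) ^ 2)

/-- The Weierstrass zeta function `ζ(z; τ)`. -/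
def wzeta (τ z : ℂ) : ℂ :=
  1 / z + ∑' ω : Lam' τ, (1 / (z - (ω : ℂ)) + 1 / (ω : ℂ) + z / (ω : ℂ) ^ 2)

/-- The Weierstrass sigma function `σ(z; τ)`. -/
def wsigma (τ z : ℂ) : ℂ :=
  z * ∏' ω : Lam' τ,
    ((1 - z / (ω : ℂ)) * Complex.exp (z / (ω : ℂ) + z ^ 2 / (2 * (ω : ℂ) ^ 2)))

/-- `℘'(z; τ)`. -/
def wpd (τ : ℂ) : ℂ → ℂ := deriv (wp τ)

/-- `℘''(z; τ)`. -/
def wpdd (τ : ℂ) : ℂ → ℂ := deriv (deriv (wp τ))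

/-- The constant `B(A)`. -/
def Bc (τ p A : ℂ) : ℂ :=
  A ^ 2 - wzeta τ (2 * p) * A - 3 / 4 * wp τ (2 * p) - 2 * wp τ p

/-- The potential `q(z; A)`. -/
def qpot (τ p A z : ℂ) : ℂ :=
  2 * wp τ z + 3 / 4 * (wp τ (z + p) + wp τ (z - p))
    + A * (wzeta τ (z + p) - wzeta τ (z - p)) + Bc τ p A

/-- The singular set `S = Λ_τ ∪ (p + Λ_τ) ∪ (−p + Λ_τ)`. -/
def Sset (τ p : ℂ) : Set ℂ :=
  Lam τ ∪ {z | z - p ∈ Lam τ} ∪ {z | z + p ∈ Lam τ}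

/-- The unique elliptic solution `Φ_e(z; A)` of the second symmetric product equation. -/
def Phie (τ p A z : ℂ) : ℂ :=
  wp τ z + (A / 2 - 3 * wpdd τ p / (8 * wpd τ p)) * (wzeta τ (z + p) - wzeta τ (z - p))
    - A ^ 2 + (wpdd τ p / (2 * wpd τ p) - wzeta τ p) * A
    - wp τ p + 3 / 4 * (wpdd τ p / wpd τ p) * wzeta τ p
    + 3 / 16 * (wpdd τ p ^ 2 / wpd τ p ^ 2)

/-- The cubic factor `Y₁(A)`. -/
def Y1 (τ p A : ℂ) : ℂ :=
  A ^ 3 - 5 * wpdd τ p / (4 * wpd τ p) * A ^ 2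
    + 3 * (wp τ p + wpdd τ p ^ 2 / (16 * wpd τ p ^ 2)) * A
    + wpd τ p / 2 - 9 * wpdd τ p / (4 * wpd τ p) * wp τ p
    + 9 / 64 * (wpdd τ p ^ 3 / wpd τ p ^ 3)

/-- The cubic factor `Y₂(A)`. -/
def Y2 (τ p A : ℂ) : ℂ :=
  A ^ 3 - wpdd τ p / (4 * wpd τ p) * A ^ 2
    - 5 / 16 * (wpdd τ p ^ 2 / wpd τ p ^ 2) * A
    + 2 * wpd τ p - 3 / 64 * (wpdd τ p ^ 3 / wpd τ p ^ 3)

/-- The logarithmic derivative `φ_{a,c} = y_{a,c}'/y_{a,c}`. -/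
def phiac (τ p a₁ a₂ c z : ℂ) : ℂ :=
  c + wzeta τ (z - a₁) + wzeta τ (z - a₂) - wzeta τ z
    - 1 / 2 * (wzeta τ (z + p) + wzeta τ (z - p))

/-- The error function `g = φ_{a,c}' + φ_{a,c}² − q(·;A)`. -/
def gfun (τ p a₁ a₂ c A z : ℂ) : ℂ :=
  deriv (phiac τ p a₁ a₂ c) z + (phiac τ p a₁ a₂ c z) ^ 2 - qpot τ p A z

/-! Near `0` we have `φ_{a,c} = w − 1/z` with `w` holomorphic and, `ζ` being odd,
`w(0) = c − ζ(a₁) − ζ(a₂)`; likewise `q = 2/z² + r` with `r` holomorphic. The double poles of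
`φ' + φ²` and of `q` cancel, so `g = (w' + w² − r) − 2w/z` near `0`, whose residue is `−2 w(0)`.
The regularity of `ζ − 1/z` and `℘ − 1/z²` at the origin comes from the locally uniform
convergence of the lattice sums over `ℤ + τℤ`, viewed as the lattice of a `PeriodPair`. -/

lemma neg_mem_Lam_iff {τ z : ℂ} : -z ∈ Lam τ ↔ z ∈ Lam τ := by
  refine ⟨fun ⟨m, n, h⟩ => ⟨-m, -n, ?_⟩, fun ⟨m, n, h⟩ => ⟨-m, -n, ?_⟩⟩ <;>
    push_cast <;> linear_combination -h

lemma zero_mem_Lam (τ : ℂ) : (0 : ℂ) ∈ Lam τ := ⟨0, 0, by simp⟩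

lemma add_mem_Lam {τ a b : ℂ} (ha : a ∈ Lam τ) (hb : b ∈ Lam τ) : a + b ∈ Lam τ := by
  obtain ⟨m, n, rfl⟩ := ha
  obtain ⟨m', n', rfl⟩ := hb
  exact ⟨m + m', n + n', by push_cast; ring⟩

lemma linearIndependent_one_of_im_pos {τ : ℂ} (hτ : 0 < τ.im) : LinearIndependent ℝ ![1, τ] := by
  refine LinearIndependent.pair_iff.mpr fun s t h => ?_
  have him : t * τ.im = 0 := by simpa using congrArg Complex.im h
  have ht : t = 0 := (mul_eq_zero.mp him).resolve_right hτ.ne'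
  exact ⟨by simpa [ht] using congrArg Complex.re h, ht⟩

def stdPeriodPair (τ : ℂ) (hτ : 0 < τ.im) : PeriodPair := ⟨1, τ, linearIndependent_one_of_im_pos hτ⟩

lemma mem_lattice_stdPeriodPair {τ : ℂ} (hτ : 0 < τ.im) {z : ℂ} :
    z ∈ (stdPeriodPair τ hτ).lattice ↔ z ∈ Lam τ := by
  simp [PeriodPair.mem_lattice, stdPeriodPair, Lam, eq_comm]

lemma tsum_Lam'_eq_tsum_lattice {τ : ℂ} (hτ : 0 < τ.im) (g : ℂ → ℂ) :
    ∑' ω : Lam' τ, g ω = ∑' l : (stdPeriodPair τ hτ).lattice, if (l : ℂ) = 0 then 0 else g l := by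
  classical
  refine (tsum_subtype (Lam' τ) g).trans (.trans ?_ (tsum_subtype
    ((stdPeriodPair τ hτ).lattice : Set ℂ) fun z => if z = 0 then 0 else g z).symm)
  congr 1 with z
  rw [Set.indicator_apply, Set.indicator_apply, SetLike.mem_coe, mem_lattice_stdPeriodPair]
  by_cases hz : z = 0 <;> simp [Lam', hz]

namespace PeriodPair

variable (L : PeriodPair)

def weierstrassZetaExcept (l₀ z : ℂ) : ℂ :=
  ∑' l : L.lattice, if (l : ℂ) = l₀ then 0 else 1 / (z - l) + 1 / l + z / l ^ 2

lemma weierstrassZeta_bound (r : ℝ) (hr : 0 < r) (s : ℂ) (hs : ‖s‖ < r) (l : ℂ)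
    (h : 2 * r ≤ ‖l‖) : ‖1 / (s - l) + 1 / l + s / l ^ 2‖ ≤ 2 * r ^ 2 * ‖l‖ ^ (-3 : ℝ) := by
  have hl : 0 < ‖l‖ := by linarith
  have hsl : ‖l‖ / 2 ≤ ‖s - l‖ := by
    rw [norm_sub_rev]
    linarith [norm_sub_norm_le l s]
  have hsl₀ : s - l ≠ 0 := norm_pos_iff.mp (by linarith)
  calc ‖1 / (s - l) + 1 / l + s / l ^ 2‖ = ‖s‖ ^ 2 / (‖l‖ ^ 2 * ‖s - l‖) := by
        rw [show 1 / (s - l) + 1 / l + s / l ^ 2 = s ^ 2 / (l ^ 2 * (s - l)) by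
          field_simp [norm_pos_iff.mp hl]; ring]
        simp
    _ ≤ r ^ 2 / (‖l‖ ^ 2 * (‖l‖ / 2)) := by gcongr
    _ = 2 * r ^ 2 * ‖l‖ ^ (-3 : ℝ) := by
        rw [Real.rpow_neg hl.le, show (3 : ℝ) = (3 : ℕ) by norm_num, Real.rpow_natCast]
        field

lemma hasSumLocallyUniformly_weierstrassZetaExcept (l₀ : ℂ) :
    HasSumLocallyUniformly
      (fun (l : L.lattice) (z : ℂ) ↦ if (l : ℂ) = l₀ then 0 else 1 / (z - l) + 1 / l + z / l ^ 2)
      (L.weierstrassZetaExcept l₀) := by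
  refine L.hasSumLocallyUniformly_aux (u := (2 * · ^ 2 * ‖·‖ ^ (-3 : ℝ))) _
    (fun _ _ ↦ (ZLattice.summable_norm_rpow _ _ (by simp; norm_num)).mul_left _) fun r hr ↦
    Filter.eventually_atTop.mpr ⟨2 * r, ?_⟩
  rintro _ h s hs l rfl
  split_ifs
  · simp only [norm_zero]; positivity
  · exact weierstrassZeta_bound r hr s hs l h

lemma differentiableOn_weierstrassZetaExcept (l₀ : ℂ) :
    DifferentiableOn ℂ (L.weierstrassZetaExcept l₀) (L.lattice \ {l₀})ᶜ := by
  refine (L.hasSumLocallyUniformly_weierstrassZetaExcept l₀).hasSumLocallyUniformlyOn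
    |>.differentiableOn (.of_forall fun _ ↦ .fun_sum fun _ _ ↦ ?_) L.isOpen_compl_lattice_sdiff
  split_ifs
  · simp
  · refine .add (.add (.div (by fun_prop) (by fun_prop) ?_) (by fun_prop)) (by fun_prop)
    aesop (add simp sub_eq_zero)

lemma analyticOnNhd_weierstrassZetaExcept (l₀ : ℂ) :
    AnalyticOnNhd ℂ (L.weierstrassZetaExcept l₀) (L.lattice \ {l₀})ᶜ :=
  (L.differentiableOn_weierstrassZetaExcept l₀).analyticOnNhd L.isOpen_compl_lattice_sdiff

end PeriodPair

lemma wzeta_eq_inv_add {τ : ℂ} (hτ : 0 < τ.im) (z : ℂ) :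
    wzeta τ z = z⁻¹ + (stdPeriodPair τ hτ).weierstrassZetaExcept 0 z := by
  rw [wzeta, one_div]
  exact congrArg _ (tsum_Lam'_eq_tsum_lattice hτ fun ω => 1 / (z - ω) + 1 / ω + z / ω ^ 2)

lemma wp_eq_inv_sq_add {τ : ℂ} (hτ : 0 < τ.im) (z : ℂ) :
    wp τ z = (z ^ 2)⁻¹ + (stdPeriodPair τ hτ).weierstrassPExcept 0 z := by
  rw [wp, one_div]
  exact congrArg _ (tsum_Lam'_eq_tsum_lattice hτ fun ω => 1 / (z - ω) ^ 2 - 1 / ω ^ 2)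

lemma wzeta_neg (τ z : ℂ) : wzeta τ (-z) = -wzeta τ z := by
  have hneg : ∀ ω : ℂ, ω ∈ Lam' τ ↔ -ω ∈ Lam' τ := fun ω => by
    simp [Lam', neg_mem_Lam_iff]
  rw [wzeta, wzeta, ← ((Equiv.neg ℂ).subtypeEquiv hneg).tsum_eq, neg_add, ← tsum_neg]
  congr 1
  · ring
  · congr 1 with ω
    show 1 / (-z - -(ω : ℂ)) + 1 / -(ω : ℂ) + -z / (-(ω : ℂ)) ^ 2 = _
    rw [show -z - -(ω : ℂ) = -(z - ω) by ring, neg_sq]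
    simp only [one_div, inv_neg, neg_div]
    ring

-- A junk value: `ζ` has a pole at `0`, but `1 / 0 = 0` in Lean.
lemma wzeta_zero (τ : ℂ) : wzeta τ 0 = 0 := by
  linear_combination (by simpa using wzeta_neg τ 0 : wzeta τ 0 = -wzeta τ 0) / 2

lemma analyticAt_wzeta_sub_inv {τ z₀ : ℂ} (hτ : 0 < τ.im) (hz₀ : z₀ ∉ Lam τ \ {0}) :
    AnalyticAt ℂ (fun z => wzeta τ z - z⁻¹) z₀ := by
  simp_rw [wzeta_eq_inv_add hτ, add_sub_cancel_left]
  exact (stdPeriodPair τ hτ).analyticOnNhd_weierstrassZetaExcept 0 z₀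
    (by simpa [mem_lattice_stdPeriodPair] using hz₀)

lemma analyticAt_wp_sub_inv_sq {τ z₀ : ℂ} (hτ : 0 < τ.im) (hz₀ : z₀ ∉ Lam τ \ {0}) :
    AnalyticAt ℂ (fun z => wp τ z - (z ^ 2)⁻¹) z₀ := by
  simp_rw [wp_eq_inv_sq_add hτ, add_sub_cancel_left]
  exact (stdPeriodPair τ hτ).analyticOnNhd_weierstrassPExcept 0 z₀
    (by simpa [mem_lattice_stdPeriodPair] using hz₀)

lemma analyticAt_wzeta {τ z₀ : ℂ} (hτ : 0 < τ.im) (hz₀ : z₀ ∉ Lam τ) :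
    AnalyticAt ℂ (wzeta τ) z₀ := by
  have h₀ : z₀ ≠ 0 := by rintro rfl; exact hz₀ (zero_mem_Lam τ)
  have h := analyticAt_wzeta_sub_inv hτ fun h => hz₀ h.1
  rw [show wzeta τ = fun z => z⁻¹ + (wzeta τ z - z⁻¹) by simp]
  fun_prop (disch := assumption)

lemma analyticAt_wp {τ z₀ : ℂ} (hτ : 0 < τ.im) (hz₀ : z₀ ∉ Lam τ) :
    AnalyticAt ℂ (wp τ) z₀ := by
  have h₀ : z₀ ≠ 0 := by rintro rfl; exact hz₀ (zero_mem_Lam τ)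
  have h := analyticAt_wp_sub_inv_sq hτ fun h => hz₀ h.1
  rw [show wp τ = fun z => (z ^ 2)⁻¹ + (wp τ z - (z ^ 2)⁻¹) by simp]
  fun_prop (disch := simpa)

lemma exists_phiac_eq_sub_inv {τ p a₁ a₂ : ℂ} (c : ℂ) (hτ : 0 < τ.im) (hp : p ∉ Lam τ)
    (ha₁ : a₁ ∉ Lam τ) (ha₂ : a₂ ∉ Lam τ) :
    ∃ w : ℂ → ℂ, AnalyticAt ℂ w 0 ∧ w 0 = c - wzeta τ a₁ - wzeta τ a₂ ∧
      phiac τ p a₁ a₂ c = fun z => w z - z⁻¹ := by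
  refine ⟨fun z => phiac τ p a₁ a₂ c z + z⁻¹, ?_, ?_, by simp⟩
  · have h₀ := analyticAt_wzeta_sub_inv hτ (z₀ := 0) (by simp)
    have h₁ := analyticAt_wzeta hτ (z₀ := 0 - a₁) (by simpa [neg_mem_Lam_iff])
    have h₂ := analyticAt_wzeta hτ (z₀ := 0 - a₂) (by simpa [neg_mem_Lam_iff])
    have h₃ := analyticAt_wzeta hτ (z₀ := 0 + p) (by simpa)
    have h₄ := analyticAt_wzeta hτ (z₀ := 0 - p) (by simpa [neg_mem_Lam_iff])
    rw [show (fun z => phiac τ p a₁ a₂ c z + z⁻¹) = fun z => c + wzeta τ (z - a₁)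
        + wzeta τ (z - a₂) - (wzeta τ z - z⁻¹) - 1 / 2 * (wzeta τ (z + p) + wzeta τ (z - p)) by
      funext z; simp only [phiac]; ring]
    fun_prop
  · simp only [phiac, zero_sub, zero_add, inv_zero, wzeta_neg, wzeta_zero]
    ring

lemma exists_qpot_eq_two_inv_sq_add {τ p : ℂ} (A : ℂ) (hτ : 0 < τ.im) (hp : p ∉ Lam τ) :
    ∃ r : ℂ → ℂ, AnalyticAt ℂ r 0 ∧ ∀ z, qpot τ p A z = 2 * (z ^ 2)⁻¹ + r z := by
  refine ⟨fun z => qpot τ p A z - 2 * (z ^ 2)⁻¹, ?_, fun z => by ring⟩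
  have h₀ := analyticAt_wp_sub_inv_sq hτ (z₀ := 0) (by simp)
  have h₁ := analyticAt_wp hτ (z₀ := 0 + p) (by simpa)
  have h₂ := analyticAt_wp hτ (z₀ := 0 - p) (by simpa [neg_mem_Lam_iff])
  have h₃ := analyticAt_wzeta hτ (z₀ := 0 + p) (by simpa)
  have h₄ := analyticAt_wzeta hτ (z₀ := 0 - p) (by simpa [neg_mem_Lam_iff])
  rw [show (fun z => qpot τ p A z - 2 * (z ^ 2)⁻¹) = fun z => 2 * (wp τ z - (z ^ 2)⁻¹)
      + 3 / 4 * (wp τ (z + p) + wp τ (z - p)) + A * (wzeta τ (z + p) - wzeta τ (z - p))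
      + Bc τ p A by
    funext z; simp only [qpot]; ring]
  fun_prop

lemma deriv_sub_inv_add_sq_sub {w : ℂ → ℂ} {z : ℂ} (hz : z ≠ 0) (hw : DifferentiableAt ℂ w z)
    (ρ : ℂ) : deriv (fun z => w z - z⁻¹) z + (w z - z⁻¹) ^ 2 - (2 * (z ^ 2)⁻¹ + ρ)
      = deriv w z + w z ^ 2 - ρ + -2 * w z / z := by
  rw [deriv_fun_sub hw (differentiableAt_inv hz), deriv_inv]
  field_simp
  ring

lemma tendsto_mul_of_eventuallyEq_add_div {G h v : ℂ → ℂ}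
    (hG : G =ᶠ[𝓝[≠] 0] fun z => h z + v z / z) (hh : ContinuousAt h 0) (hv : ContinuousAt v 0) :
    Tendsto (fun z => z * G z) (𝓝[≠] 0) (𝓝 (v 0)) := by
  have hlim : Tendsto (fun z => z * h z + v z) (𝓝[≠] 0) (𝓝 (0 * h 0 + v 0)) :=
    ((continuousAt_id.mul hh).add hv).tendsto.mono_left nhdsWithin_le_nhds
  rw [zero_mul, zero_add] at hlim
  refine hlim.congr' ?_
  filter_upwards [hG, self_mem_nhdsWithin] with z hGz hz
  rw [hGz, mul_add, mul_div_cancel₀ _ hz]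

lemma AnalyticAt.dslope {𝕜 E : Type*} [NontriviallyNormedField 𝕜] [NormedAddCommGroup E]
    [NormedSpace 𝕜 E] {f : 𝕜 → E} {z₀ : 𝕜} (hf : AnalyticAt 𝕜 f z₀) :
    AnalyticAt 𝕜 (dslope f z₀) z₀ :=
  let ⟨_, hp⟩ := hf
  ⟨_, hp.has_fpower_series_dslope_fslope⟩

lemma exists_analyticAt_eventuallyEq_iff {G h v : ℂ → ℂ}
    (hG : G =ᶠ[𝓝[≠] 0] fun z => h z + v z / z) (hh : AnalyticAt ℂ h 0) (hv : AnalyticAt ℂ v 0) :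
    (∃ g₀ : ℂ → ℂ, AnalyticAt ℂ g₀ 0 ∧ ∀ᶠ z in 𝓝[≠] 0, g₀ z = G z) ↔ v 0 = 0 := by
  constructor
  · rintro ⟨g₀, hg₀, hg₀G⟩
    refine tendsto_nhds_unique (tendsto_mul_of_eventuallyEq_add_div hG hh.continuousAt
      hv.continuousAt) ?_
    have hlim : Tendsto (fun z => z * g₀ z) (𝓝[≠] 0) (𝓝 (0 * g₀ 0)) :=
      (continuousAt_id.mul hg₀.continuousAt).tendsto.mono_left nhdsWithin_le_nhds
    rw [zero_mul] at hlim
    exact hlim.congr' (hg₀G.mono fun z hz => by rw [hz])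
  · intro hv₀
    refine ⟨fun z => h z + dslope v 0 z, hh.add hv.dslope, ?_⟩
    filter_upwards [hG, self_mem_nhdsWithin] with z hGz hz
    rw [hGz, dslope_of_ne _ hz, slope_def_field, hv₀, sub_zero, sub_zero]

theorem stmt_8_general (τ p a₁ a₂ c A : ℂ) (hτ : 0 < τ.im) (hp : 2 * p ∉ Lam τ)
    (ha₁ : a₁ ∉ Sset τ p) (ha₂ : a₂ ∉ Sset τ p) :
    Tendsto (fun z => z * gfun τ p a₁ a₂ c A z) (𝓝[≠] (0 : ℂ))
      (𝓝 (2 * (wzeta τ a₁ + wzeta τ a₂ - c))) ∧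
    ((∃ g₀ : ℂ → ℂ, AnalyticAt ℂ g₀ 0 ∧
        ∀ᶠ z in 𝓝[≠] (0 : ℂ), g₀ z = gfun τ p a₁ a₂ c A z) ↔
      c = wzeta τ a₁ + wzeta τ a₂) := by
  have hpΛ : p ∉ Lam τ := fun h => hp (two_mul p ▸ add_mem_Lam h h)
  obtain ⟨w, hw, hw₀, hφ⟩ := exists_phiac_eq_sub_inv c hτ hpΛ (fun h => ha₁ (.inl (.inl h)))
    (fun h => ha₂ (.inl (.inl h)))
  obtain ⟨r, hr, hq⟩ := exists_qpot_eq_two_inv_sq_add A hτ hpΛ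
  have hg : gfun τ p a₁ a₂ c A =ᶠ[𝓝[≠] 0]
      fun z => (deriv w z + w z ^ 2 - r z) + -2 * w z / z := by
    filter_upwards [self_mem_nhdsWithin, nhdsWithin_le_nhds hw.eventually_analyticAt]
      with z hz hwz
    rw [gfun, hφ, hq]
    exact deriv_sub_inv_add_sq_sub hz hwz.differentiableAt (r z)
  have hh : AnalyticAt ℂ (fun z => deriv w z + w z ^ 2 - r z) 0 := by
    have hw' := hw.deriv
    fun_prop
  have hv : AnalyticAt ℂ (fun z => -2 * w z) 0 := by fun_prop
  refine ⟨?_, (exists_analyticAt_eventuallyEq_iff hg hh hv).trans ?_⟩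
  · convert tendsto_mul_of_eventuallyEq_add_div hg hh.continuousAt hv.continuousAt using 2
    rw [hw₀]
    ring
  · rw [hw₀]
    exact ⟨fun h => by linear_combination (-1 / 2 : ℂ) * h, fun h => by linear_combination -2 * h⟩

/-- `g` has at most a simple pole at `0` with residue
`2(ζ(a₁)+ζ(a₂)−c)`; it extends holomorphically across `0` iff `c = ζ(a₁)+ζ(a₂)`. -/
theorem stmt_8 (τ p a₁ a₂ c A : ℂ) (hτ : 0 < τ.im) (hp : 2 * p ∉ Lam τ)
    (h12 : a₁ - a₂ ∉ Lam τ) (ha₁ : a₁ ∉ Sset τ p) (ha₂ : a₂ ∉ Sset τ p) :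
    Tendsto (fun z => z * gfun τ p a₁ a₂ c A z) (𝓝[≠] (0 : ℂ))
      (𝓝 (2 * (wzeta τ a₁ + wzeta τ a₂ - c))) ∧
    ((∃ g₀ : ℂ → ℂ, AnalyticAt ℂ g₀ 0 ∧
        ∀ᶠ z in 𝓝[≠] (0 : ℂ), g₀ z = gfun τ p a₁ a₂ c A z) ↔
      c = wzeta τ a₁ + wzeta τ a₂) :=
  stmt_8_general τ p a₁ a₂ c A hτ hp ha₁ ha₂
end
end

section
/- For ρ = e^{πi/3} and a = (1+ρ)/3, the Weierstrass elliptic function of the lattice Λ_ρ satisfies ℘(a; ρ) = 0. -/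
open Complex Filter Topology

noncomputable section

open PeriodPair

namespace PeriodPair

theorem weierstrassP_mul {L : PeriodPair} {c : ℂ} (hc : c ≠ 0)
    (hL : ∀ l, c * l ∈ L.lattice ↔ l ∈ L.lattice) (z : ℂ) :
    ℘[L] (c * z) = (c ^ 2)⁻¹ * ℘[L] z := by
  let mulLattice : L.lattice ≃ L.lattice :=
    { toFun l := ⟨c * l, (hL l).2 l.2⟩
      invFun l := ⟨c⁻¹ * l, (hL _).1 (by simp [mul_inv_cancel_left₀ hc])⟩
      left_inv l := Subtype.ext (inv_mul_cancel_left₀ hc l)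
      right_inv l := Subtype.ext (mul_inv_cancel_left₀ hc l) }
  have hterm (l : L.lattice) : 1 / (c * z - mulLattice l) ^ 2 - 1 / (mulLattice l : ℂ) ^ 2
      = (c ^ 2)⁻¹ * (1 / (z - l) ^ 2 - 1 / (l : ℂ) ^ 2) := by
    simp only [mulLattice, Equiv.coe_fn_mk, ← mul_sub, mul_pow, one_div, mul_inv]
  rw [weierstrassP, weierstrassP, ← mulLattice.tsum_eq, tsum_congr hterm, tsum_mul_left]

/-- Evenness and periodicity give `℘ (c * a) = ℘ a`, homogeneity gives `℘ (c * a) = c⁻² ℘ a`. -/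
theorem weierstrassP_eq_zero_of_mul_add_mem {L : PeriodPair} {c : ℂ} (hc : c ≠ 0)
    (hL : ∀ l, c * l ∈ L.lattice ↔ l ∈ L.lattice) (hc₂ : c ^ 2 ≠ 1) {a : ℂ}
    (ha : c * a + a ∈ L.lattice) : ℘[L] a = 0 := by
  have hfixed : ℘[L] (c * a) = ℘[L] a :=
    calc ℘[L] (c * a) = ℘[L] (-a + (c * a + a)) := by ring_nf
      _ = ℘[L] (-a) := L.weierstrassP_add_coe (-a) ⟨_, ha⟩
      _ = ℘[L] a := L.weierstrassP_neg a
  rw [weierstrassP_mul hc hL] at hfixed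
  have hzero : ((c ^ 2)⁻¹ - 1) * ℘[L] a = 0 := by rw [sub_mul, hfixed, one_mul, sub_self]
  exact (mul_eq_zero.mp hzero).resolve_left (sub_ne_zero.mpr (by simpa using hc₂))

def ofTau (τ : ℂ) (hτ : τ.im ≠ 0) : PeriodPair where
  ω₁ := 1
  ω₂ := τ
  indep := LinearIndependent.pair_iff.mpr fun s t h => by
    have ht : t = 0 := by simpa [hτ] using congrArg Complex.im h
    subst ht
    simpa using h

theorem mem_lattice_ofTau {τ : ℂ} {hτ : τ.im ≠ 0} {z : ℂ} :
    z ∈ (ofTau τ hτ).lattice ↔ z ∈ Lam τ := by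
  simp only [mem_lattice, ofTau, mul_one, Lam, Set.mem_ofPred_eq, eq_comm]

theorem mul_mem_lattice_ofTau {τ : ℂ} (hτ : τ.im ≠ 0) (hτ₂ : τ ^ 2 = τ - 1) {l : ℂ}
    (hl : l ∈ (ofTau τ hτ).lattice) : τ * l ∈ (ofTau τ hτ).lattice := by
  obtain ⟨m, n, rfl⟩ := mem_lattice.mp hl
  refine mem_lattice.mpr ⟨-n, m + n, ?_⟩
  simp only [ofTau]
  push_cast
  linear_combination (-(n : ℂ)) * hτ₂

theorem mul_mem_lattice_ofTau_iff {τ : ℂ} (hτ : τ.im ≠ 0) (hτ₂ : τ ^ 2 = τ - 1) (l : ℂ) :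
    τ * l ∈ (ofTau τ hτ).lattice ↔ l ∈ (ofTau τ hτ).lattice := by
  refine ⟨fun h => ?_, mul_mem_lattice_ofTau hτ hτ₂⟩
  have hl : l = τ * l - τ * (τ * l) := by linear_combination l * hτ₂
  rw [hl]
  exact sub_mem h (mul_mem_lattice_ofTau hτ hτ₂ h)

end PeriodPair

theorem Lam'_eq_lattice_ofTau_sdiff_zero {τ : ℂ} (hτ : τ.im ≠ 0) :
    Lam' τ = ((ofTau τ hτ).lattice : Set ℂ) \ {0} := by
  ext z
  simp [Lam', mem_lattice_ofTau]

/-- Mathlib's `℘` sums over the whole lattice: its `l = 0` term is `1 / z ^ 2` since `1 / 0 = 0`. -/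
theorem wp_eq_weierstrassP {τ : ℂ} (hτ : τ.im ≠ 0) (z : ℂ) : wp τ z = ℘[ofTau τ hτ] z := by
  set L := ofTau τ hτ
  have hExcept : L.weierstrassPExcept (0 : L.lattice) z
      = ∑' ω : Lam' τ, (1 / (z - (ω : ℂ)) ^ 2 - 1 / (ω : ℂ) ^ 2) := by
    rw [weierstrassPExcept, ZeroMemClass.coe_zero]
    refine (tsum_eq_tsum_sdiff_singleton (L.lattice : Set ℂ) (b := 0)
      (f := fun l : ℂ => if l = 0 then 0 else 1 / (z - l) ^ 2 - 1 / l ^ 2) (by simp)).trans ?_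
    rw [Lam'_eq_lattice_ofTau_sdiff_zero hτ]
    exact tsum_congr fun ω => if_neg ω.2.2
  rw [wp, ← L.weierstrassPExcept_add 0, hExcept]
  simp [add_comm]

theorem wp_one_add_div_three_eq_zero {τ : ℂ} (hτ : τ.im ≠ 0) (hτ₂ : τ ^ 2 = τ - 1) :
    wp τ ((1 + τ) / 3) = 0 := by
  have hτ0 : τ ≠ 0 := fun h => hτ (by simp [h])
  have hτ1 : τ ^ 2 ≠ 1 := fun h => hτ (by simpa [h] using (congrArg Complex.im hτ₂).symm)
  have hfixed : τ * ((1 + τ) / 3) + (1 + τ) / 3 = τ := by linear_combination hτ₂ / 3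
  rw [wp_eq_weierstrassP hτ]
  refine weierstrassP_eq_zero_of_mul_add_mem hτ0 (mul_mem_lattice_ofTau_iff hτ hτ₂) hτ1 ?_
  rw [hfixed]
  exact (ofTau τ hτ).ω₂_mem_lattice

theorem exp_pi_mul_I_div_three :
    Complex.exp (Real.pi * Complex.I / 3) = 1 / 2 + Real.sqrt 3 / 2 * Complex.I := by
  rw [show (Real.pi : ℂ) * Complex.I / 3 = (Real.pi / 3 : ℝ) * Complex.I by push_cast; ring,
    Complex.exp_mul_I, ← Complex.ofReal_cos, ← Complex.ofReal_sin, Real.cos_pi_div_three,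
    Real.sin_pi_div_three]
  push_cast
  ring

/-- for `ρ = e^{πi/3}` and `a = (1+ρ)/3`, `℘(a; ρ) = 0`. -/
theorem stmt_18 :
    wp (Complex.exp (Real.pi * Complex.I / 3))
      ((1 + Complex.exp (Real.pi * Complex.I / 3)) / 3) = 0 := by
  refine wp_one_add_div_three_eq_zero ?_ ?_ <;> rw [exp_pi_mul_I_div_three]
  · simp
  · have h3 : (Real.sqrt 3 : ℂ) ^ 2 = 3 := by exact_mod_cast Real.sq_sqrt (by norm_num : (0:ℝ) ≤ 3)
    linear_combination Complex.I ^ 2 / 4 * h3 + 3 / 4 * Complex.I_sq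
end
end

section
/- For ρ = e^{πi/3} and a = (1+ρ)/3, the Weierstrass zeta function of the lattice Λ_ρ satisfies 3ζ(a; ρ) = η₁(ρ) + η₂(ρ); equivalently, Hecke's function Z(1/3, 1/3, ρ) := ζ((1+ρ)/3; ρ) − (1/3)η₁(ρ) − (1/3)η₂(ρ) vanishes, so that a = (1+ρ)/3 is a nontrivial critical point of the Green function on the rhombic torus E_ρ. -/
open Complex Filter Topology

noncomputable section

/-- The quasi-period `η₁ = 2ζ(1/2)`. -/
def eta1 (τ : ℂ) : ℂ := 2 * wzeta τ (1 / 2)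

/-- The quasi-period `η₂ = 2ζ(τ/2)`. -/
def eta2 (τ : ℂ) : ℂ := 2 * wzeta τ (τ / 2)

/-!
Written as a sum over the whole lattice `Λ = Lam τ`, `ζ` has two symmetries that give the two
relations pinning down `ζ(a)`. Since `ρ Λ = Λ`, `ζ(ρ z) = ρ⁻¹ ζ(z)`. Since `ω ↦ 1 - ω` permutes `Λ`
and the summands of `ζ(u) + ζ(1 - u) - 2 ζ(1/2)` are odd under it, `ζ(u) + ζ(1 - u) = η₁`.
For `a = (1 + ρ) / 3` we have `ρ (1 - a) = a`, hence `ζ(1 - a) = ρ ζ(a)` and `η₁ = (1 + ρ) ζ(a)`;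
also `η₂ = ρ⁻¹ η₁`, and `(1 + ρ)(1 + ρ⁻¹) = 3` because `ρ² = ρ - 1`.
-/

def zetaTerm (z ω : ℂ) : ℂ := 1 / (z - ω) + 1 / ω + z / ω ^ 2

lemma zetaTerm_eq_div {z ω : ℂ} (hω : ω ≠ 0) (hzω : z ≠ ω) :
    zetaTerm z ω = z ^ 2 / (ω ^ 2 * (z - ω)) := by
  rw [zetaTerm]
  field_simp [sub_ne_zero.2 hzω]
  ring

lemma norm_zetaTerm_le {z ω : ℂ} (h : 2 * ‖z‖ < ‖ω‖) :
    ‖zetaTerm z ω‖ ≤ 2 * ‖z‖ ^ 2 * ‖ω‖ ^ (-3 : ℤ) := by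
  have hω : 0 < ‖ω‖ := by linarith [norm_nonneg z]
  have hzω : ‖ω‖ / 2 ≤ ‖z - ω‖ := by
    rw [norm_sub_rev]; linarith [norm_sub_norm_le ω z]
  rw [zetaTerm_eq_div (norm_pos_iff.1 hω) (by rintro rfl; linarith), norm_div, norm_mul,
    norm_pow, norm_pow, zpow_neg, zpow_ofNat]
  calc ‖z‖ ^ 2 / (‖ω‖ ^ 2 * ‖z - ω‖) ≤ ‖z‖ ^ 2 / (‖ω‖ ^ 2 * (‖ω‖ / 2)) := by gcongr
    _ = 2 * ‖z‖ ^ 2 * (‖ω‖ ^ 3)⁻¹ := by field_simp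

lemma PeriodPair.summable_zetaTerm (L : PeriodPair) (z : ℂ) :
    Summable fun l : L.lattice ↦ zetaTerm z l := by
  refine .of_norm_bounded_eventually
    ((ZLattice.summable_norm_zpow L.lattice (-3) (by simp)).mul_left (2 * ‖z‖ ^ 2)) ?_
  have hfar : ∀ᶠ l : L.lattice in Filter.cofinite, 2 * ‖z‖ + 1 ≤ ‖l‖ := by
    rw [← Filter.cocompact_eq_cofinite]
    exact tendsto_norm_cocompact_atTop.eventually_ge_atTop _
  filter_upwards [hfar] with l hl
  exact norm_zetaTerm_le (by rw [← Submodule.coe_norm]; linarith)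

lemma one_mem_Lam (τ : ℂ) : (1 : ℂ) ∈ Lam τ := ⟨1, 0, by simp⟩

lemma sub_mem_Lam {τ ω ω' : ℂ} (hω : ω ∈ Lam τ) (hω' : ω' ∈ Lam τ) : ω - ω' ∈ Lam τ := by
  obtain ⟨m, n, rfl⟩ := hω
  obtain ⟨m', n', rfl⟩ := hω'
  exact ⟨m - m', n - n', by push_cast; ring⟩

lemma mul_mem_Lam {τ ω : ℂ} {p q : ℤ} (hτ : τ ^ 2 = p + q * τ) (hω : ω ∈ Lam τ) :
    τ * ω ∈ Lam τ := by
  obtain ⟨m, n, rfl⟩ := hω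
  exact ⟨n * p, m + n * q, by push_cast; linear_combination (n : ℂ) * hτ⟩

lemma linearIndependent_one_of_im_ne_zero {τ : ℂ} (hτ : τ.im ≠ 0) :
    LinearIndependent ℝ ![1, τ] := by
  refine LinearIndependent.pair_iff.2 fun s t hst ↦ ?_
  have ht : t = 0 := by simpa [hτ] using congrArg Complex.im hst
  subst ht
  simpa using hst

def periodPairOne {τ : ℂ} (hτ : τ.im ≠ 0) : PeriodPair :=
  ⟨1, τ, linearIndependent_one_of_im_ne_zero hτ⟩

lemma mem_lattice_periodPairOne {τ : ℂ} (hτ : τ.im ≠ 0) {ω : ℂ} :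
    ω ∈ (periodPairOne hτ).lattice ↔ ω ∈ Lam τ := by
  simp [PeriodPair.mem_lattice, periodPairOne, Lam, eq_comm]

lemma summable_zetaTerm_Lam {τ : ℂ} (hτ : τ.im ≠ 0) (z : ℂ) :
    Summable fun ω : Lam τ ↦ zetaTerm z ω :=
  (Equiv.subtypeEquivRight fun _ ↦ mem_lattice_periodPairOne hτ).summable_iff.1
    ((periodPairOne hτ).summable_zetaTerm z)

/-- The `ω = 0` summand is `1 / z`, because `1 / 0 = 0`. -/
lemma wzeta_eq_tsum_Lam {τ : ℂ} (hτ : τ.im ≠ 0) (z : ℂ) :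
    wzeta τ z = ∑' ω : Lam τ, zetaTerm z ω := by
  have hdisj : Disjoint ({0} : Set ℂ) (Lam' τ) := by simp [Lam']
  have hunion : ({0} : Set ℂ) ∪ Lam' τ = Lam τ := by
    ext ω; by_cases h : ω = 0 <;> simp [Lam', h, zero_mem_Lam]
  have hs : Summable fun ω : Lam' τ ↦ zetaTerm z ω :=
    (summable_zetaTerm_Lam hτ z).comp_injective (i := Set.inclusion fun _ h ↦ h.1)
      (Set.inclusion_injective _)
  rw [← hunion, Summable.tsum_union_disjoint (f := zetaTerm z) hdisj .of_finite hs,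
    tsum_singleton, wzeta]
  simp [zetaTerm]

theorem tsum_eq_zero_of_comp_equiv_eq_neg {α R : Type*} [NonAssocRing R] [NoZeroDivisors R]
    [CharZero R] [TopologicalSpace R] [IsTopologicalAddGroup R] [T2Space R] {f : α → R}
    (e : α ≃ α) (hf : ∀ x, f (e x) = -f x) : ∑' x, f x = 0 :=
  CharZero.eq_neg_self_iff.1 <| calc
    ∑' x, f x = ∑' x, f (e x) := (e.tsum_eq f).symm
    _ = -∑' x, f x := by rw [tsum_congr hf, tsum_neg]

lemma zetaTerm_mul_mul {c : ℂ} (hc : c ≠ 0) (z ω : ℂ) :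
    zetaTerm (c * z) (c * ω) = c⁻¹ * zetaTerm z ω := by
  simp only [zetaTerm]
  field_simp

theorem wzeta_mul {τ c : ℂ} (hc : c ≠ 0) (hcΛ : ∀ ω, c * ω ∈ Lam τ ↔ ω ∈ Lam τ) (z : ℂ) :
    wzeta τ (c * z) = c⁻¹ * wzeta τ z := by
  let e : Lam' τ ≃ Lam' τ := (Equiv.mulLeft₀ c hc).subtypeEquiv fun ω ↦
    and_congr (hcΛ ω).symm (mul_ne_zero_iff_left hc).symm
  rw [wzeta, wzeta, ← e.tsum_eq, mul_add, ← tsum_mul_left, one_div, one_div, mul_inv]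
  congr 1
  exact tsum_congr fun ω ↦ zetaTerm_mul_mul hc z ω

/-- The `1 / ω` and `z / ω ^ 2` parts cancel in this combination, which leaves
`1 / (u - ω) + 1 / (v - u - ω) - 2 / (v / 2 - ω)`, odd under `ω ↦ v - ω`. -/
lemma zetaTerm_combination_sub (u v ω : ℂ) :
    zetaTerm u (v - ω) + zetaTerm (v - u) (v - ω) - 2 * zetaTerm (v / 2) (v - ω) =
      -(zetaTerm u ω + zetaTerm (v - u) ω - 2 * zetaTerm (v / 2) ω) := by
  simp only [zetaTerm]
  rw [show u - (v - ω) = -(v - u - ω) by ring, show v - u - (v - ω) = -(u - ω) by ring,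
    show v / 2 - (v - ω) = -(v / 2 - ω) by ring]
  simp only [div_neg, one_div]
  ring

theorem wzeta_add_wzeta_sub {τ v : ℂ} (hτ : τ.im ≠ 0) (hv : v ∈ Lam τ) (u : ℂ) :
    wzeta τ u + wzeta τ (v - u) = 2 * wzeta τ (v / 2) := by
  let e : Lam τ ≃ Lam τ := (Equiv.subLeft v).subtypeEquiv fun ω ↦
    ⟨sub_mem_Lam hv, fun h ↦ by simpa using sub_mem_Lam hv h⟩
  have hsum := tsum_eq_zero_of_comp_equiv_eq_neg e
    (f := fun ω : Lam τ ↦ zetaTerm u ω + zetaTerm (v - u) ω - 2 * zetaTerm (v / 2) ω)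
    fun ω ↦ zetaTerm_combination_sub u v ω
  have hu := summable_zetaTerm_Lam hτ u
  have hvu := summable_zetaTerm_Lam hτ (v - u)
  have hv2 := summable_zetaTerm_Lam hτ (v / 2)
  rw [(hu.add hvu).tsum_sub (hv2.mul_left 2), hu.tsum_add hvu, tsum_mul_left] at hsum
  rw [wzeta_eq_tsum_Lam hτ, wzeta_eq_tsum_Lam hτ, wzeta_eq_tsum_Lam hτ]
  linear_combination hsum

local notation "ρ" => Complex.exp (Real.pi * Complex.I / 3)

lemma rho_eq : ρ = (1 + √3 * I) / 2 := by
  rw [show (Real.pi : ℂ) * I / 3 = (Real.pi / 3 : ℝ) * I by push_cast; ring, exp_mul_I,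
    ← ofReal_cos, ← ofReal_sin, Real.cos_pi_div_three, Real.sin_pi_div_three]
  push_cast
  ring

lemma rho_sq : ρ ^ 2 = ρ - 1 := by
  have h3 : ((√3 : ℝ) : ℂ) ^ 2 = 3 := by norm_cast; simp
  rw [rho_eq]
  linear_combination (I ^ 2 / 4) * h3 + (3 / 4) * I_sq

lemma rho_im_ne_zero : (ρ).im ≠ 0 := by
  rw [rho_eq]
  simp

lemma rho_mul_mem_Lam_iff (ω : ℂ) : ρ * ω ∈ Lam ρ ↔ ω ∈ Lam ρ := by
  have hρ : ρ ^ 2 = (-1 : ℤ) + (1 : ℤ) * ρ := by push_cast; linear_combination rho_sq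
  refine ⟨fun h ↦ ?_, mul_mem_Lam hρ⟩
  have := sub_mem_Lam h (mul_mem_Lam hρ h)
  rwa [show ρ * ω - ρ * (ρ * ω) = ω by linear_combination (-ω) * rho_sq] at this

/-- for `ρ = e^{πi/3}` and `a = (1+ρ)/3`, Hecke's function
`Z(1/3, 1/3, ρ)` vanishes: `3ζ(a; ρ) = η₁(ρ) + η₂(ρ)`. -/
theorem stmt_19 :
    3 * wzeta (Complex.exp (Real.pi * Complex.I / 3))
        ((1 + Complex.exp (Real.pi * Complex.I / 3)) / 3)
      = eta1 (Complex.exp (Real.pi * Complex.I / 3))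
        + eta2 (Complex.exp (Real.pi * Complex.I / 3)) := by
  have hinv : ρ⁻¹ = 1 - ρ := inv_eq_of_mul_eq_one_right (by linear_combination -rho_sq)
  have hrot (z : ℂ) : wzeta ρ (ρ * z) = (1 - ρ) * wzeta ρ z := by
    rw [wzeta_mul (exp_ne_zero _) rho_mul_mem_Lam_iff, hinv]
  have ha : wzeta ρ ((1 + ρ) / 3) = (1 - ρ) * wzeta ρ (1 - (1 + ρ) / 3) := by
    rw [← hrot]
    congr 1
    linear_combination (1 / 3) * rho_sq
  have hη₁ : wzeta ρ ((1 + ρ) / 3) + wzeta ρ (1 - (1 + ρ) / 3) = eta1 ρ :=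
    wzeta_add_wzeta_sub rho_im_ne_zero (one_mem_Lam ρ) _
  have hη₂ : eta2 ρ = (1 - ρ) * eta1 ρ := by
    rw [eta1, eta2, mul_left_comm, ← hrot, mul_one_div]
  rw [hη₂]
  linear_combination (2 - ρ) * hη₁ + (1 + ρ) * ha - wzeta ρ (1 - (1 + ρ) / 3) * rho_sq
end
end
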